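/- Let n₁,…,n_k be positive integers, N = Σ_i n_i, and let ρ = ⊕_{i=1}^{k} p_i·ρ_i be a block-diagonal density matrix, where (p₁,…,p_k) is a probability vector and each ρ_i is an n_i×n_i density matrix. Suppose ρ = Σ_j w_j·σ_j where (w_j) is a probability vector and each σ_j is of the form 0 ⊕ … ⊕ |φ_j⟩⟨φ_j| ⊕ … ⊕ 0 for some block index and some unit vector φ_j (i.e. each σ_j is a pure state of the block algebra). Then H(w) ≥ H(p) + Σ_{i=1}^{k} p_i · S_VN(ρ_i). -/

import Mathlib

open Matrix
open scoped ComplexOrder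

/-- The Shannon entropy `H(p) = −Σ_i p_i log p_i` (with `0·log 0 = 0`,
which holds since `Real.log 0 = 0`). -/
noncomputable def shannonEntropy {m : ℕ} (p : Fin m → ℝ) : ℝ :=
  -∑ i, p i * Real.log (p i)

open scoped Classical in
/-- The von Neumann entropy `S_VN(ρ) = −Σ_i λ_i log λ_i`, where `λ_i` are the
eigenvalues of the (Hermitian) matrix `ρ` listed with multiplicity. -/
noncomputable def vonNeumannEntropy {ι : Type*} [Fintype ι] [DecidableEq ι]
    (ρ : Matrix ι ι ℂ) : ℝ :=
  if h : ρ.IsHermitian then -∑ i, h.eigenvalues i * Real.log (h.eigenvalues i) else 0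

/-!
Write `η = negMulLog`. The decomposition restricted to block `i` reads
`p i • ρs i = ∑_{b j = i} w j • |φ j⟩⟨φ j|`; taking traces gives `p i = ∑_{b j = i} w j`, and the
grouping rule `η (p * q) = q * η p + p * η q` turns the claim into `S(ρ) ≤ H(q)` for every
decomposition `ρ = ∑ q j • |φ j⟩⟨φ j|` of a density matrix into pure states.

For that, write `φ j` in an eigenbasis of `ρ`, with coefficients `c j α`. Then
`μ α = ∑ j, q j * |c j α|²` for the eigenvalues `μ`, so `q = D μ` with
`D j α = q j * |c j α|² / μ α`. The columns of `D` sum to one on the support of `μ`, and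
positivity of `diag μ - q j • |c j⟩⟨c j|` bounds its rows by one, so concavity of `η` gives
`∑ η (μ α) ≤ ∑ η (q j)`.
-/

open Real Complex

theorem shannonEntropy_eq_sum_negMulLog {m : ℕ} (p : Fin m → ℝ) :
    shannonEntropy p = ∑ i, negMulLog (p i) := by
  simp [shannonEntropy, negMulLog]

theorem vonNeumannEntropy_eq_sum_negMulLog {ι : Type*} [Fintype ι] [DecidableEq ι]
    {ρ : Matrix ι ι ℂ} (hρ : ρ.IsHermitian) :
    vonNeumannEntropy ρ = ∑ α, negMulLog (hρ.eigenvalues α) := by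
  simp [vonNeumannEntropy, hρ, negMulLog]

/-- The missing mass `1 - ∑ t` is put on the point `0`, where `negMulLog` vanishes. -/
theorem Real.sum_mul_negMulLog_le_negMulLog_sum {ι : Type*} [Fintype ι] {t x : ι → ℝ}
    (ht : ∀ i, 0 ≤ t i) (ht1 : ∑ i, t i ≤ 1) (hx : ∀ i, 0 ≤ x i) :
    ∑ i, t i * negMulLog (x i) ≤ negMulLog (∑ i, t i * x i) := by
  have h := concaveOn_negMulLog.le_map_sum (t := (Finset.univ : Finset (Option ι)))
    (w := fun o => o.elim (1 - ∑ i, t i) t) (p := fun o => o.elim 0 x)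
    (fun o _ => by cases o <;> simp [ht, ht1]) (by simp [Fintype.sum_option])
    (fun o _ => by cases o <;> simp [hx])
  simpa [Fintype.sum_option] using h

theorem Real.sum_negMulLog_le_sum_negMulLog_of_eq_sum_mul {ι J : Type*} [Fintype ι] [Fintype J]
    {μ : ι → ℝ} {q : J → ℝ} (D : J → ι → ℝ) (hμ : ∀ α, 0 ≤ μ α) (hD : ∀ j α, 0 ≤ D j α)
    (hrow : ∀ j, ∑ α, D j α ≤ 1) (hcol : ∀ α, μ α ≠ 0 → ∑ j, D j α = 1)
    (hq : ∀ j, q j = ∑ α, D j α * μ α) :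
    ∑ α, negMulLog (μ α) ≤ ∑ j, negMulLog (q j) := by
  have hμ_eq (α : ι) : negMulLog (μ α) = ∑ j, D j α * negMulLog (μ α) := by
    rcases eq_or_ne (μ α) 0 with h | h
    · simp [h]
    · rw [← Finset.sum_mul, hcol α h, one_mul]
  calc ∑ α, negMulLog (μ α) = ∑ j, ∑ α, D j α * negMulLog (μ α) := by
        rw [Finset.sum_comm]
        exact Finset.sum_congr rfl fun α _ => hμ_eq α
    _ ≤ ∑ j, negMulLog (q j) := Finset.sum_le_sum fun j _ => by
        rw [hq j]
        exact sum_mul_negMulLog_le_negMulLog_sum (hD j) (hrow j) hμ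

namespace Matrix

theorem star_dotProduct_self_eq_sum_normSq {ι : Type*} [Fintype ι] (v : ι → ℂ) :
    star v ⬝ᵥ v = ((∑ a, normSq (v a) : ℝ) : ℂ) := by
  simp [dotProduct, normSq_eq_conj_mul_self]

theorem star_dotProduct_diagonal_ofReal_mulVec {ι : Type*} [Fintype ι] [DecidableEq ι]
    (μ : ι → ℝ) (u : ι → ℂ) :
    star u ⬝ᵥ (diagonal (fun α => (μ α : ℂ)) *ᵥ u) = ((∑ α, μ α * normSq (u α) : ℝ) : ℂ) := by
  simp only [mulVec_diagonal, dotProduct, Pi.star_apply, RCLike.star_def]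
  push_cast
  refine Finset.sum_congr rfl fun α _ => ?_
  rw [normSq_eq_conj_mul_self]
  ring

theorem star_dotProduct_sum_smul_vecMulVec_star_mulVec {ι J : Type*} [Fintype ι] [Fintype J]
    (q : J → ℝ) (c : J → ι → ℂ) (u : ι → ℂ) :
    star u ⬝ᵥ ((∑ j, (q j : ℂ) • vecMulVec (c j) (star (c j))) *ᵥ u)
      = ((∑ j, q j * normSq (star (c j) ⬝ᵥ u) : ℝ) : ℂ) := by
  simp only [sum_mulVec, smul_mulVec, vecMulVec_mulVec, dotProduct_sum, dotProduct_smul]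
  push_cast
  refine Finset.sum_congr rfl fun j _ => ?_
  rw [normSq_eq_conj_mul_self, op_smul_eq_mul, smul_eq_mul, star_dotProduct u, RCLike.star_def]

theorem mul_vecMulVec_star_mul_conjTranspose {m n α : Type*} [Fintype m] [Fintype n]
    [CommSemiring α] [StarRing α] (A : Matrix m n α) (v : n → α) :
    A * vecMulVec v (star v) * Aᴴ = vecMulVec (A *ᵥ v) (star (A *ᵥ v)) := by
  rw [mul_vecMulVec, vecMulVec_mul, star_mulVec]

theorem star_mulVec_dotProduct_mulVec_of_mem_unitaryGroup {n α : Type*} [Fintype n]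
    [DecidableEq n] [CommRing α] [StarRing α] {U : Matrix n n α}
    (hU : U ∈ unitaryGroup n α) (v w : n → α) :
    star (U *ᵥ v) ⬝ᵥ (U *ᵥ w) = star v ⬝ᵥ w := by
  rw [star_mulVec, ← dotProduct_mulVec, mulVec_mulVec, ← star_eq_conjTranspose,
    mem_unitaryGroup_iff'.1 hU, one_mulVec]

theorem blockDiagonal'_submatrix_sigmaMk {o α : Type*} [DecidableEq o] [Zero α]
    {m n : o → Type*} (M : ∀ i, Matrix (m i) (n i) α) (i : o) :
    (blockDiagonal' M).submatrix (Sigma.mk i) (Sigma.mk i) = M i := by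
  ext
  simp [blockDiagonal'_apply_eq]

theorem submatrix_sigmaMk_sum_smul_blockDiagonal'_update {o J : Type*} [DecidableEq o]
    [Fintype J] {m : o → Type*} (w : J → ℂ) (b : J → o) (φ : ∀ j, m (b j) → ℂ) (i : o) :
    (∑ j, w j • blockDiagonal' (Function.update (fun i => (0 : Matrix (m i) (m i) ℂ)) (b j)
        (vecMulVec (φ j) (star (φ j))))).submatrix (Sigma.mk i) (Sigma.mk i)
      = ∑ j : {j // b j = i}, w j • vecMulVec (j.2 ▸ φ j) (star (j.2 ▸ φ j)) := by
  ext a d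
  simp only [submatrix_apply, sum_apply, smul_apply, blockDiagonal'_apply_eq]
  rw [← Fintype.sum_subtype_add_sum_subtype (fun j => b j = i)]
  rw [Fintype.sum_eq_zero (fun j : {j // ¬b j = i} => _) fun j => by
    simp [Function.update_of_ne (Ne.symm j.2)], add_zero]
  refine Fintype.sum_congr _ _ fun ⟨j, hj⟩ => ?_
  subst hj
  simp

end Matrix

section DiagonalDecomposition

variable {ι J : Type*} [Fintype ι] [DecidableEq ι] [Fintype J] {μ : ι → ℝ} {q : J → ℝ}
  {c : J → ι → ℂ}

omit [Fintype ι] in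
theorem eq_sum_mul_normSq_of_diagonal_eq
    (h : diagonal (fun α => (μ α : ℂ)) = ∑ j, (q j : ℂ) • vecMulVec (c j) (star (c j)))
    (α : ι) : μ α = ∑ j, q j * normSq (c j α) := by
  have := congrFun₂ h α α
  simp only [diagonal_apply_eq, Matrix.sum_apply, Matrix.smul_apply, vecMulVec_apply,
    Pi.star_apply, RCLike.star_def, mul_conj, smul_eq_mul] at this
  exact_mod_cast this

omit [Fintype ι] in
theorem nonneg_of_diagonal_eq (hq : ∀ j, 0 ≤ q j)
    (h : diagonal (fun α => (μ α : ℂ)) = ∑ j, (q j : ℂ) • vecMulVec (c j) (star (c j)))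
    (α : ι) : 0 ≤ μ α :=
  eq_sum_mul_normSq_of_diagonal_eq h α ▸
    Finset.sum_nonneg fun j _ => mul_nonneg (hq j) (normSq_nonneg _)

/-- Test the decomposition against `u α = c j α / μ α` (which is `0` where `μ α = 0`): with
`t = ∑ α, |c j α|² / μ α` it gives `q j * t ^ 2 ≤ t`. -/
theorem mul_sum_normSq_div_le_one_of_diagonal_eq (hq : ∀ j, 0 ≤ q j)
    (h : diagonal (fun α => (μ α : ℂ)) = ∑ j, (q j : ℂ) • vecMulVec (c j) (star (c j)))
    (j : J) : q j * ∑ α, normSq (c j α) / μ α ≤ 1 := by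
  set t := ∑ α, normSq (c j α) / μ α
  set u : ι → ℂ := fun α => c j α / μ α
  have hcu : star (c j) ⬝ᵥ u = t := by
    simp only [dotProduct, u, t]
    push_cast
    refine Finset.sum_congr rfl fun α _ => ?_
    rw [normSq_eq_conj_mul_self]
    simp [mul_div_assoc]
  have hμu : ∑ α, μ α * normSq (u α) = t := Finset.sum_congr rfl fun α _ => by
    rcases eq_or_ne (μ α) 0 with hα | hα
    · simp [u, hα]
    · simp only [u, normSq_div, normSq_ofReal]
      field_simp
  have hquad : ∑ j', q j' * normSq (star (c j') ⬝ᵥ u) = t := by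
    have := star_dotProduct_sum_smul_vecMulVec_star_mulVec q c u
    rw [← h, star_dotProduct_diagonal_ofReal_mulVec, hμu] at this
    exact_mod_cast this.symm
  have ht : 0 ≤ t := Finset.sum_nonneg fun α _ =>
    div_nonneg (normSq_nonneg _) (nonneg_of_diagonal_eq hq h α)
  have hsq : q j * t ^ 2 ≤ t := by
    calc q j * t ^ 2 = q j * normSq (star (c j) ⬝ᵥ u) := by rw [hcu, normSq_ofReal, sq]
      _ ≤ t := hquad ▸ Finset.single_le_sum (f := fun j' => q j' * normSq (star (c j') ⬝ᵥ u))
          (fun j' _ => mul_nonneg (hq j') (normSq_nonneg _)) (Finset.mem_univ j)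
  rcases ht.eq_or_lt with ht0 | htpos
  · simp [← ht0]
  · nlinarith

theorem sum_negMulLog_le_of_diagonal_eq (hq : ∀ j, 0 ≤ q j) (hc : ∀ j, star (c j) ⬝ᵥ c j = 1)
    (h : diagonal (fun α => (μ α : ℂ)) = ∑ j, (q j : ℂ) • vecMulVec (c j) (star (c j))) :
    ∑ α, negMulLog (μ α) ≤ ∑ j, negMulLog (q j) := by
  have hμ := nonneg_of_diagonal_eq hq h
  have hμ_eq := eq_sum_mul_normSq_of_diagonal_eq h
  have hc_sum (j : J) : ∑ α, normSq (c j α) = 1 := by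
    exact_mod_cast (star_dotProduct_self_eq_sum_normSq (c j)).symm.trans (hc j)
  refine Real.sum_negMulLog_le_sum_negMulLog_of_eq_sum_mul
    (fun j α => q j * normSq (c j α) / μ α) hμ
    (fun j α => div_nonneg (mul_nonneg (hq j) (normSq_nonneg _)) (hμ α)) (fun j => ?_)
    (fun α hα => ?_) (fun j => ?_)
  · simpa only [mul_div_assoc, ← Finset.mul_sum] using
      mul_sum_normSq_div_le_one_of_diagonal_eq hq h j
  · rw [← Finset.sum_div, ← hμ_eq α, div_self hα]
  · have hzero (α : ι) (hα : μ α = 0) : q j * normSq (c j α) = 0 :=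
      (Finset.sum_eq_zero_iff_of_nonneg fun j _ => mul_nonneg (hq j) (normSq_nonneg _)).1
        ((hμ_eq α).symm.trans hα) j (Finset.mem_univ j)
    calc q j = ∑ α, q j * normSq (c j α) := by rw [← Finset.mul_sum, hc_sum, mul_one]
      _ = ∑ α, q j * normSq (c j α) / μ α * μ α := Finset.sum_congr rfl fun α _ => by
          rcases eq_or_ne (μ α) 0 with hα | hα
          · simp [hα, hzero α hα]
          · field_simp

end DiagonalDecomposition

theorem vonNeumannEntropy_le_sum_negMulLog_of_eq_sum {ι J : Type*} [Fintype ι] [DecidableEq ι]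
    [Fintype J] {ρ : Matrix ι ι ℂ} {q : J → ℝ} (hq : ∀ j, 0 ≤ q j) {φ : J → ι → ℂ}
    (hφ : ∀ j, star (φ j) ⬝ᵥ φ j = 1)
    (hρ : ρ = ∑ j, (q j : ℂ) • vecMulVec (φ j) (star (φ j))) :
    vonNeumannEntropy ρ ≤ ∑ j, negMulLog (q j) := by
  have hH : ρ.IsHermitian := hρ ▸ (posSemidef_sum _ fun j _ =>
    (posSemidef_vecMulVec_self_star (φ j)).smul (by exact_mod_cast hq j)).isHermitian
  set U := hH.eigenvectorUnitary
  have hU : (star U : Matrix ι ι ℂ) ∈ unitaryGroup ι ℂ := (star U).2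
  rw [vonNeumannEntropy_eq_sum_negMulLog hH]
  refine sum_negMulLog_le_of_diagonal_eq hq (c := fun j => (star U : Matrix ι ι ℂ) *ᵥ φ j)
    (fun j => (star_mulVec_dotProduct_mulVec_of_mem_unitaryGroup hU _ _).trans (hφ j)) ?_
  have hdiag := hH.conjStarAlgAut_star_eigenvectorUnitary
  rw [Unitary.conjStarAlgAut_star_apply] at hdiag
  calc diagonal (fun α => (hH.eigenvalues α : ℂ))
      = (star U : Matrix ι ι ℂ) * ρ * (star U : Matrix ι ι ℂ)ᴴ := by
        rw [← star_eq_conjTranspose, star_star]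
        exact hdiag.symm
    _ = _ := by
        rw [hρ]
        simp only [Finset.mul_sum, Finset.sum_mul, mul_smul_comm, smul_mul_assoc,
          mul_vecMulVec_star_mul_conjTranspose]

theorem negMulLog_add_mul_vonNeumannEntropy_le {ι J : Type*} [Fintype ι] [DecidableEq ι]
    [Fintype J] {ρ : Matrix ι ι ℂ} (hρ : ρ.trace = 1) {p : ℝ} (hp : 0 ≤ p) {w : J → ℝ}
    (hw : ∀ j, 0 ≤ w j) {φ : J → ι → ℂ} (hφ : ∀ j, star (φ j) ⬝ᵥ φ j = 1)
    (h : (p : ℂ) • ρ = ∑ j, (w j : ℂ) • vecMulVec (φ j) (star (φ j))) :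
    negMulLog p + p * vonNeumannEntropy ρ ≤ ∑ j, negMulLog (w j) := by
  have hp_eq : p = ∑ j, w j := by
    have := congrArg trace h
    simp only [trace_smul, hρ, trace_sum, trace_vecMulVec, dotProduct_comm (φ _), hφ,
      smul_eq_mul, mul_one] at this
    exact_mod_cast this
  rcases hp.eq_or_lt with hp0 | hp_pos
  · have hw0 := (Finset.sum_eq_zero_iff_of_nonneg fun j _ => hw j).1 (hp_eq ▸ hp0).symm
    simp [← hp0, hw0]
  set q : J → ℝ := fun j => w j / p
  have hw_eq (j : J) : w j = p * q j := (mul_div_cancel₀ _ hp_pos.ne').symm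
  have hq_sum : ∑ j, q j = 1 := by rw [← Finset.sum_div, ← hp_eq, div_self hp_pos.ne']
  have hρ_eq : ρ = ∑ j, (q j : ℂ) • vecMulVec (φ j) (star (φ j)) := by
    have hpC : (p : ℂ) ≠ 0 := by exact_mod_cast hp_pos.ne'
    rw [← inv_smul_smul₀ hpC ρ, h, Finset.smul_sum]
    simp only [smul_smul, q]
    push_cast
    simp [div_eq_inv_mul]
  have hS := vonNeumannEntropy_le_sum_negMulLog_of_eq_sum
    (fun j => div_nonneg (hw j) hp_pos.le) hφ hρ_eq
  calc negMulLog p + p * vonNeumannEntropy ρ ≤ negMulLog p + p * ∑ j, negMulLog (q j) := by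
        gcongr
    _ = ∑ j, negMulLog (w j) := by
        simp_rw [hw_eq, negMulLog_mul]
        rw [Finset.sum_add_distrib, ← Finset.sum_mul, hq_sum, one_mul, Finset.mul_sum]

theorem shannonEntropy_decomposition_ge_blockEntropy_general
    (k : ℕ) (n : Fin k → ℕ)
    (p : Fin k → ℝ) (hp0 : ∀ i, 0 ≤ p i)
    (ρs : ∀ i, Matrix (Fin (n i)) (Fin (n i)) ℂ)
    (hρs : ∀ i, (ρs i).PosSemidef ∧ (ρs i).trace = 1)
    (ρ : Matrix (Σ i : Fin k, Fin (n i)) (Σ i : Fin k, Fin (n i)) ℂ)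
    (hρ : ρ = Matrix.blockDiagonal' fun i => (p i : ℂ) • ρs i)
    (M : ℕ) (w : Fin M → ℝ) (hw0 : ∀ j, 0 ≤ w j)
    (b : Fin M → Fin k) (φ : ∀ j, Fin (n (b j)) → ℂ)
    (hφ : ∀ j, ∑ a, ‖φ j a‖ ^ 2 = 1)
    (hdecomp : ρ = ∑ j, (w j : ℂ) •
      Matrix.blockDiagonal'
        (Function.update (fun i => (0 : Matrix (Fin (n i)) (Fin (n i)) ℂ)) (b j)
          (Matrix.vecMulVec (φ j) (star (φ j))))) :
    shannonEntropy p + ∑ i, p i * vonNeumannEntropy (ρs i) ≤ shannonEntropy w := by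
  have hφ_unit (j : Fin M) : star (φ j) ⬝ᵥ φ j = 1 := by
    simp [star_dotProduct_self_eq_sum_normSq, normSq_eq_norm_sq, hφ]
  have hblock (i : Fin k) :
      negMulLog (p i) + p i * vonNeumannEntropy (ρs i) ≤ ∑ j : {j // b j = i}, negMulLog (w j) := by
    refine negMulLog_add_mul_vonNeumannEntropy_le (φ := fun j => j.2 ▸ φ j) (hρs i).2 (hp0 i)
      (fun j => hw0 j) (fun ⟨j, hj⟩ => by subst hj; exact hφ_unit j) ?_
    have := congrArg (submatrix · (Sigma.mk i) (Sigma.mk i)) (hρ.symm.trans hdecomp)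
    rwa [blockDiagonal'_submatrix_sigmaMk, submatrix_sigmaMk_sum_smul_blockDiagonal'_update]
      at this
  calc shannonEntropy p + ∑ i, p i * vonNeumannEntropy (ρs i)
      = ∑ i, (negMulLog (p i) + p i * vonNeumannEntropy (ρs i)) := by
        rw [shannonEntropy_eq_sum_negMulLog, Finset.sum_add_distrib]
    _ ≤ ∑ i, ∑ j : {j // b j = i}, negMulLog (w j) := Finset.sum_le_sum fun i _ => hblock i
    _ = shannonEntropy w := by
        rw [shannonEntropy_eq_sum_negMulLog, ← Fintype.sum_fiberwise b]

/-- For a block-diagonal density matrix `ρ = ⊕_i p_i·ρ_i`, the Shannon entropy `H(w)`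
of the weights of any decomposition of `ρ` into pure states of the block algebra
(each supported in a single block, as a rank-one projection there) satisfies
`H(w) ≥ H(p) + Σ_i p_i · S_VN(ρ_i)`. -/
theorem shannonEntropy_decomposition_ge_blockEntropy
    (k : ℕ) (n : Fin k → ℕ)
    (p : Fin k → ℝ) (hp0 : ∀ i, 0 ≤ p i) (hp1 : ∑ i, p i = 1)
    (ρs : ∀ i, Matrix (Fin (n i)) (Fin (n i)) ℂ)
    (hρs : ∀ i, (ρs i).PosSemidef ∧ (ρs i).trace = 1)
    (ρ : Matrix (Σ i : Fin k, Fin (n i)) (Σ i : Fin k, Fin (n i)) ℂ)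
    (hρ : ρ = Matrix.blockDiagonal' fun i => (p i : ℂ) • ρs i)
    (M : ℕ) (w : Fin M → ℝ) (hw0 : ∀ j, 0 ≤ w j) (hw1 : ∑ j, w j = 1)
    (b : Fin M → Fin k) (φ : ∀ j, Fin (n (b j)) → ℂ)
    (hφ : ∀ j, ∑ a, ‖φ j a‖ ^ 2 = 1)
    (hdecomp : ρ = ∑ j, (w j : ℂ) •
      Matrix.blockDiagonal'
        (Function.update (fun i => (0 : Matrix (Fin (n i)) (Fin (n i)) ℂ)) (b j)
          (Matrix.vecMulVec (φ j) (star (φ j))))) :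
    shannonEntropy p + ∑ i, p i * vonNeumannEntropy (ρs i) ≤ shannonEntropy w :=
  shannonEntropy_decomposition_ge_blockEntropy_general k n p hp0 ρs hρs ρ hρ M w hw0 b φ hφ hdecomp
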